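/- For the Pease sequence P = (I_n, C_n, C_n, ..., C_n) (with P_0 = I_n and P_k = C_n for 1 ≤ k ≤ n), the spreading matrix X equals I_n (up to the identity, since C_n^{k}1_b gives the standard basis vectors) and the conditions P_{0:n} = X X^T and the inverse-spreading condition hold; hence the Pease sequence lies in the set of DFT_2-based linear fast WHT algorithms. -/

import Mathlib

/-!
`C_n` is the permutation matrix of the cyclic rotation of coordinates, so every partial product
`P_{0:j} = C_n^j` is orthogonal and moves `1_b` to a standard basis vector; hence both the spreading
matrix and the matrix of inverse rows are `I_n`, and `P_{0:n} = C_n^n = I_n`.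

For `W`, index the rows and columns of `2^n × 2^n` matrices by bit vectors in `F_2^n`. The array of
butterflies becomes the Hadamard transform on the last coordinate, and commuting `P(C_n)` past a
Hadamard transform on a set `S` of coordinates rotates `S`. So the `k`-th partial product of the
Pease factorisation is the Hadamard transform on the last `k` coordinates followed by `P(C_n^k)`,
and for `k = n` this is `H_n · P(I_n) = H_n`.
-/

open Matrix

/-- Binary representation of `i` as a vector in `F_2^n`, most significant bit first. -/
def bits (n : ℕ) (i : Fin (2 ^ n)) : Fin n → ZMod 2 :=
  fun k => if Nat.testBit i.val (n - 1 - k.val) then 1 else 0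

/-- The vector `1_b = (0,...,0,1)ᵀ`. -/
def oneb (n : ℕ) : Fin n → ZMod 2 := fun k => if k.val = n - 1 then 1 else 0

/-- Permutation matrix `P(Q)` of the linear permutation `π(Q)`:
entry `(j, i)` is `1` iff `j_b = Q i_b`. -/
def permMat (n : ℕ) (Q : Matrix (Fin n) (Fin n) (ZMod 2)) :
    Matrix (Fin (2 ^ n)) (Fin (2 ^ n)) ℤ :=
  Matrix.of fun j i => if bits n j = Q.mulVec (bits n i) then 1 else 0

/-- The array of butterflies `I_{2^{n-1}} ⊗ DFT_2`. -/
def butterflies (n : ℕ) : Matrix (Fin (2 ^ n)) (Fin (2 ^ n)) ℤ :=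
  Matrix.of fun j i =>
    if j.val / 2 = i.val / 2 then (if j.val % 2 = 1 ∧ i.val % 2 = 1 then -1 else 1) else 0

/-- `W(P) = P(P₀)·(I ⊗ DFT₂)·P(P₁) ⋯ (I ⊗ DFT₂)·P(Pₙ)`. -/
def W (n : ℕ) (P : ℕ → Matrix (Fin n) (Fin n) (ZMod 2)) :
    Matrix (Fin (2 ^ n)) (Fin (2 ^ n)) ℤ :=
  permMat n (P 0) * (List.ofFn fun k : Fin n => butterflies n * permMat n (P (k.val + 1))).prod

/-- `P_{i:j} = P_i P_{i+1} ⋯ P_j` (identity if `j < i`). -/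
def Pseg {n : ℕ} (P : ℕ → Matrix (Fin n) (Fin n) (ZMod 2)) (i j : ℕ) :
    Matrix (Fin n) (Fin n) (ZMod 2) :=
  ((List.range (j + 1 - i)).map fun k => P (i + k)).prod

/-- The spreading matrix `X = (P_{0:n-1}1_b | P_{0:n-2}1_b | ⋯ | P_0 1_b)`. -/
def spread (n : ℕ) (P : ℕ → Matrix (Fin n) (Fin n) (ZMod 2)) :
    Matrix (Fin n) (Fin n) (ZMod 2) :=
  Matrix.of fun r c => (Pseg P 0 (n - 1 - c.val)).mulVec (oneb n) r

/-- The matrix whose rows are `(P_{0:n-1}^{-T}1_b)ᵀ, ..., (P_0^{-T}1_b)ᵀ`. -/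
noncomputable def spreadInvRows (n : ℕ) (P : ℕ → Matrix (Fin n) (Fin n) (ZMod 2)) :
    Matrix (Fin n) (Fin n) (ZMod 2) :=
  Matrix.of fun r c => (Pseg P 0 (n - 1 - r.val))⁻¹.transpose.mulVec (oneb n) c

/-- The Hadamard matrix `H_n` with entries `(-1)^{⟨i_b, j_b⟩}`. -/
def hadamardH (n : ℕ) : Matrix (Fin (2 ^ n)) (Fin (2 ^ n)) ℤ :=
  Matrix.of fun i j => (-1) ^ (∑ k, bits n i k * bits n j k).val

/-- The cyclic bit-rotation matrix `C_n`: ones on the superdiagonal and in the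
bottom-left corner. -/
def Cmat (n : ℕ) : Matrix (Fin n) (Fin n) (ZMod 2) :=
  Matrix.of fun k l => if l.val = k.val + 1 ∨ (k.val = n - 1 ∧ l.val = 0) then 1 else 0

/-- The Pease sequence `(I_n, C_n, ..., C_n)`. -/
def peaseP (n : ℕ) : ℕ → Matrix (Fin n) (Fin n) (ZMod 2) :=
  fun k => if k = 0 then 1 else Cmat n

open Fin.NatCast

lemma finRotate_succ_pow_apply (m k : ℕ) (i : Fin (m + 1)) :
    (finRotate (m + 1) ^ k) i = i + (k : Fin (m + 1)) := by
  induction k with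
  | zero => simp
  | succ k ih =>
    rw [pow_succ', Equiv.Perm.mul_apply, ih, finRotate_apply, Nat.cast_succ, add_assoc]

lemma finRotate_pow_self (n : ℕ) : finRotate n ^ n = 1 := by
  cases n with
  | zero => rfl
  | succ m => ext i; simp [finRotate_succ_pow_apply]

lemma Cmat_eq_permMatrix (n : ℕ) : Cmat n = (finRotate n).permMatrix (ZMod 2) := by
  ext k l
  cases n with
  | zero => exact k.elim0
  | succ m =>
    simp only [Cmat, of_apply, Equiv.Perm.permMatrix, PEquiv.toMatrix_apply, Equiv.toPEquiv_apply,
      Option.mem_some_iff, Fin.ext_iff, coe_finRotate, Fin.val_last]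
    congr 1
    apply propext
    split_ifs <;> omega

lemma Cmat_pow (n k : ℕ) : Cmat n ^ k = (finRotate n ^ k).permMatrix (ZMod 2) := by
  induction k with
  | zero => simp
  | succ k ih => rw [pow_succ', ih, pow_succ, permMatrix_mul, Cmat_eq_permMatrix]

lemma Cmat_pow_self (n : ℕ) : Cmat n ^ n = 1 := by
  rw [Cmat_pow, finRotate_pow_self, permMatrix_one]

lemma transpose_inv_Cmat_pow (n k : ℕ) : ((Cmat n ^ k)⁻¹)ᵀ = Cmat n ^ k := by
  have h : (Cmat n ^ k)ᵀ * Cmat n ^ k = 1 := by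
    rw [Cmat_pow, transpose_permMatrix, ← permMatrix_mul, mul_inv_cancel, permMatrix_one]
  rw [inv_eq_left_inv h, transpose_transpose]

lemma Cmat_pow_mulVec_oneb {n : ℕ} (r c : Fin n) :
    (Cmat n ^ (n - 1 - c.val) *ᵥ oneb n) r = (1 : Matrix (Fin n) (Fin n) (ZMod 2)) r c := by
  cases n with
  | zero => exact r.elim0
  | succ m =>
    have hc : ((m - c.val : ℕ) : Fin (m + 1)) = Fin.last m - c := by
      rw [eq_sub_iff_add_eq, ← Fin.natCast_eq_last, ← Fin.cast_val_eq_self c, Fin.val_natCast,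
        Nat.mod_eq_of_lt c.isLt, ← Nat.cast_add, Nat.sub_add_cancel (Nat.lt_succ_iff.mp c.isLt)]
    have key : r + ((m - c.val : ℕ) : Fin (m + 1)) = Fin.last m ↔ r = c := by
      rw [hc, add_sub_left_comm, add_eq_left, sub_eq_zero]
    rw [Cmat_pow, permMatrix_mulVec, Function.comp_apply, finRotate_succ_pow_apply,
      Nat.add_sub_cancel]
    simp only [one_apply, oneb, ← key, Fin.ext_iff, Fin.val_last, Nat.add_sub_cancel]

lemma Pseg_peaseP (n j : ℕ) : Pseg (peaseP n) 0 j = Cmat n ^ j := by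
  induction j with
  | zero => simp [Pseg, peaseP]
  | succ j ih =>
    rw [Pseg, Nat.sub_zero, List.range_succ, List.map_append, List.prod_append,
      ← Nat.sub_zero (j + 1), ← Pseg, ih]
    simp [peaseP, pow_succ]

lemma spread_peaseP (n : ℕ) : spread n (peaseP n) = 1 := by
  ext r c
  rw [spread, of_apply, Pseg_peaseP, Cmat_pow_mulVec_oneb]

lemma spreadInvRows_peaseP (n : ℕ) : spreadInvRows n (peaseP n) = 1 := by
  ext r c
  rw [spreadInvRows, of_apply, Pseg_peaseP, transpose_inv_Cmat_pow, Cmat_pow_mulVec_oneb]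
  simp only [one_apply, eq_comm]

lemma testBit_val_eq_false_of_le {n t : ℕ} (j : Fin (2 ^ n)) (ht : n ≤ t) :
    j.val.testBit t = false :=
  Nat.testBit_lt_two_pow (j.isLt.trans_le (Nat.pow_le_pow_right two_pos ht))

lemma bits_apply_eq_iff {n : ℕ} (j i : Fin (2 ^ n)) (k : Fin n) :
    bits n j k = bits n i k ↔ j.val.testBit (n - 1 - k) = i.val.testBit (n - 1 - k) := by
  unfold bits
  cases j.val.testBit (n - 1 - k) <;> cases i.val.testBit (n - 1 - k) <;> decide

lemma bits_injective (n : ℕ) : Function.Injective (bits n) := by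
  intro j i h
  refine Fin.ext (Nat.eq_of_testBit_eq fun t => ?_)
  by_cases ht : t < n
  · have := (bits_apply_eq_iff j i ⟨n - 1 - t, by omega⟩).mp (congrFun h _)
    rwa [show n - 1 - (n - 1 - t) = t by omega] at this
  · rw [testBit_val_eq_false_of_le j (not_lt.mp ht), testBit_val_eq_false_of_le i (not_lt.mp ht)]

noncomputable def bitsEquiv (n : ℕ) : Fin (2 ^ n) ≃ (Fin n → ZMod 2) :=
  Equiv.ofBijective (bits n) <| (Fintype.bijective_iff_injective_and_card _).mpr
    ⟨bits_injective n, by simp⟩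

lemma bits_last (m : ℕ) (j : Fin (2 ^ (m + 1))) :
    bits (m + 1) j (Fin.last m) = if j.val % 2 = 1 then 1 else 0 := by
  simp [bits, Nat.testBit_zero]

lemma div_two_eq_iff_bits (m : ℕ) (j i : Fin (2 ^ (m + 1))) :
    j.val / 2 = i.val / 2 ↔
      ∀ k ∉ ({Fin.last m} : Finset _), bits (m + 1) j k = bits (m + 1) i k := by
  simp only [Finset.mem_singleton, bits_apply_eq_iff, Nat.add_sub_cancel]
  constructor
  · intro h k hk
    have hk : k.val < m := Fin.val_lt_last hk
    obtain ⟨t, ht⟩ : ∃ t, m - k.val = t + 1 := ⟨m - k.val - 1, by omega⟩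
    rw [ht, ← Nat.testBit_div_two, ← Nat.testBit_div_two, h]
  · intro h
    refine Nat.eq_of_testBit_eq fun t => ?_
    rw [Nat.testBit_div_two, Nat.testBit_div_two]
    by_cases ht : t < m
    · have := h ⟨m - 1 - t, by omega⟩ (fun h' => by simp [Fin.ext_iff] at h'; omega)
      rwa [show m - (m - 1 - t) = t + 1 by omega] at this
    · rw [testBit_val_eq_false_of_le j (by omega), testBit_val_eq_false_of_le i (by omega)]

section BitVectorMatrices

variable {ι R : Type*} [Fintype ι] [DecidableEq ι] [Ring R]

def funMatrix {α : Type*} [DecidableEq α] (f : α → α) : Matrix α α R :=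
  of fun u v => if u = f v then 1 else 0

lemma mul_funMatrix_apply {α : Type*} [Fintype α] [DecidableEq α] (A : Matrix α α R)
    (f : α → α) (u w : α) : (A * (funMatrix f : Matrix α α R)) u w = A u (f w) := by
  simp [funMatrix, mul_apply]

lemma funMatrix_id {α : Type*} [DecidableEq α] : (funMatrix id : Matrix α α R) = 1 := by
  ext u v
  simp [funMatrix, one_apply]

lemma funMatrix_mul_funMatrix {α : Type*} [Fintype α] [DecidableEq α] (f g : α → α) :
    (funMatrix f * funMatrix g : Matrix α α R) = funMatrix (f ∘ g) := by
  ext u w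
  rw [mul_funMatrix_apply]
  rfl

def partialHadamard (S : Finset ι) : Matrix (ι → ZMod 2) (ι → ZMod 2) R :=
  of fun u v => if ∀ l ∉ S, u l = v l then (-1) ^ (∑ l ∈ S, u l * v l).val else 0

lemma partialHadamard_empty :
    (partialHadamard ∅ : Matrix (ι → ZMod 2) (ι → ZMod 2) R) = 1 := by
  ext u v
  simp [partialHadamard, one_apply, funext_iff]

lemma partialHadamard_univ (u v : ι → ZMod 2) :
    (partialHadamard Finset.univ : Matrix (ι → ZMod 2) (ι → ZMod 2) R) u v =
      (-1) ^ (u ⬝ᵥ v).val := by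
  simp [partialHadamard, dotProduct]

lemma neg_one_pow_val_add (a b : ZMod 2) :
    (-1 : R) ^ (a + b).val = (-1) ^ a.val * (-1) ^ b.val := by
  rw [ZMod.val_add, ← neg_one_pow_eq_pow_mod_two, pow_add]

lemma partialHadamard_mul_of_disjoint {S T : Finset ι} (h : Disjoint S T) :
    (partialHadamard S * partialHadamard T : Matrix (ι → ZMod 2) (ι → ZMod 2) R) =
      partialHadamard (S ∪ T) := by
  ext u w
  -- the only intermediate vector that contributes follows `w` on `S` and `u` off `S`
  let v₀ : ι → ZMod 2 := fun l => if l ∈ S then w l else u l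
  have hS : ∑ l ∈ S, u l * v₀ l = ∑ l ∈ S, u l * w l :=
    Finset.sum_congr rfl fun l hl => by simp [v₀, hl]
  have hT : ∑ l ∈ T, v₀ l * w l = ∑ l ∈ T, u l * w l :=
    Finset.sum_congr rfl fun l hl => by simp [v₀, Finset.disjoint_right.mp h hl]
  have hcond : (∀ l ∉ T, v₀ l = w l) ↔ ∀ l ∉ S ∪ T, u l = w l := by
    simp only [Finset.mem_union, not_or, v₀]
    refine ⟨fun h' l hl => ?_, fun h' l hl => ?_⟩
    · simpa [hl.1] using h' l hl.2
    · by_cases hS : l ∈ S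
      · simp [hS]
      · simp [hS, h' l ⟨hS, hl⟩]
  rw [mul_apply, Finset.sum_eq_single v₀]
  · simp only [partialHadamard, of_apply]
    rw [if_pos fun l hl => by simp [v₀, hl], hS, hT, if_congr hcond rfl rfl, Finset.sum_union h,
      neg_one_pow_val_add]
    split_ifs <;> simp
  · intro v _ hv
    simp only [partialHadamard, of_apply]
    split_ifs with hu hw
    · refine absurd (funext fun l => ?_) hv
      by_cases hS : l ∈ S
      · simp [v₀, hS, hw l (Finset.disjoint_left.mp h hS)]
      · simp [v₀, hS, hu l hS]
    all_goals simp only [mul_zero, zero_mul]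
  · simp

lemma partialHadamard_comp_symm_apply (σ : Equiv.Perm ι) (S : Finset ι) (u w : ι → ZMod 2) :
    (partialHadamard S : Matrix (ι → ZMod 2) (ι → ZMod 2) R) (u ∘ σ.symm) w =
      partialHadamard (S.map σ.symm.toEmbedding) u (w ∘ σ) := by
  simp only [partialHadamard, of_apply, Finset.sum_map, Finset.mem_map_equiv, Equiv.symm_symm,
    Function.comp_apply, Equiv.coe_toEmbedding, Equiv.apply_symm_apply]
  congr 1
  exact propext ⟨fun h l hl => by simpa using h (σ l) hl,
    fun h l hl => by simpa using h (σ.symm l) (by simpa using hl)⟩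

lemma funMatrix_comp_mul_partialHadamard (σ : Equiv.Perm ι) (S : Finset ι) :
    (funMatrix (· ∘ σ) * partialHadamard S : Matrix (ι → ZMod 2) (ι → ZMod 2) R) =
      partialHadamard (S.map σ.symm.toEmbedding) * funMatrix (· ∘ σ) := by
  ext u w
  rw [mul_funMatrix_apply, ← partialHadamard_comp_symm_apply, mul_apply]
  simp [funMatrix, ← Equiv.comp_symm_eq]

end BitVectorMatrices

lemma partialHadamard_last_mul_funMatrix_pow {R : Type*} [Ring R] (m k : ℕ) (hk : k ≤ m + 1) :
    (partialHadamard {Fin.last m} * funMatrix (· ∘ finRotate (m + 1)) :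
        Matrix (Fin (m + 1) → ZMod 2) (Fin (m + 1) → ZMod 2) R) ^ k =
      partialHadamard (Finset.univ.filter fun l : Fin (m + 1) => m < l.val + k) *
        funMatrix (· ∘ ⇑(finRotate (m + 1) ^ k)) := by
  induction k with
  | zero =>
    have hempty : (Finset.univ.filter fun l : Fin (m + 1) => m < l.val + 0) = ∅ :=
      Finset.filter_false_of_mem fun l _ => not_lt.mpr (Fin.is_le l)
    rw [hempty, partialHadamard_empty, pow_zero, pow_zero, Equiv.Perm.coe_one, one_mul]
    exact funMatrix_id.symm
  | succ k ih =>
    have hdisj : Disjoint {Fin.last m}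
        ((Finset.univ.filter fun l : Fin (m + 1) => m < l.val + k).map
          (finRotate (m + 1)).symm.toEmbedding) := by
      simp only [Finset.disjoint_singleton_left, Finset.mem_map_equiv, Equiv.symm_symm,
        Finset.mem_filter, Finset.mem_univ, true_and, finRotate_last, Fin.val_zero]
      omega
    have hunion : {Fin.last m} ∪
        (Finset.univ.filter fun l : Fin (m + 1) => m < l.val + k).map
          (finRotate (m + 1)).symm.toEmbedding =
        Finset.univ.filter fun l : Fin (m + 1) => m < l.val + (k + 1) := by
      ext l
      simp only [Finset.mem_union, Finset.mem_singleton, Finset.mem_map_equiv, Equiv.symm_symm,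
        Finset.mem_filter, Finset.mem_univ, true_and, coe_finRotate, Fin.ext_iff, Fin.val_last]
      split_ifs <;> omega
    rw [pow_succ', ih (by omega), ← mul_assoc, mul_assoc _ (funMatrix _),
      funMatrix_comp_mul_partialHadamard, ← mul_assoc, partialHadamard_mul_of_disjoint hdisj,
      hunion, mul_assoc, funMatrix_mul_funMatrix, pow_succ]
    rfl

lemma reindex_bitsEquiv_eq {n : ℕ} {R : Type*} (A : Matrix (Fin (2 ^ n)) (Fin (2 ^ n)) R)
    (A' : Matrix (Fin n → ZMod 2) (Fin n → ZMod 2) R)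
    (h : ∀ j i, A j i = A' (bits n j) (bits n i)) :
    reindex (bitsEquiv n) (bitsEquiv n) A = A' := by
  ext u v
  rw [reindex_apply, submatrix_apply, h]
  exact congr_arg₂ A' ((bitsEquiv n).apply_symm_apply u) ((bitsEquiv n).apply_symm_apply v)

lemma reindex_permMat (n : ℕ) (Q : Matrix (Fin n) (Fin n) (ZMod 2)) :
    reindex (bitsEquiv n) (bitsEquiv n) (permMat n Q) = funMatrix (Q *ᵥ ·) :=
  reindex_bitsEquiv_eq _ _ fun _ _ => rfl

lemma reindex_hadamardH (n : ℕ) :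
    reindex (bitsEquiv n) (bitsEquiv n) (hadamardH n) = partialHadamard Finset.univ :=
  reindex_bitsEquiv_eq _ _ fun _ _ => (partialHadamard_univ _ _).symm

lemma reindex_butterflies (m : ℕ) :
    reindex (bitsEquiv (m + 1)) (bitsEquiv (m + 1)) (butterflies (m + 1)) =
      partialHadamard {Fin.last m} := by
  refine reindex_bitsEquiv_eq _ _ fun j i => ?_
  rw [butterflies, of_apply, partialHadamard, of_apply,
    if_congr (div_two_eq_iff_bits m j i) rfl rfl, Finset.sum_singleton, bits_last, bits_last]
  split_ifs <;> simp_all [ZMod.val_one]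

lemma W_peaseP_eq_pow (n : ℕ) :
    W n (peaseP n) = permMat n 1 * (butterflies n * permMat n (Cmat n)) ^ n := by
  simp [W, peaseP, List.ofFn_const, List.prod_replicate]

lemma W_peaseP (n : ℕ) : W n (peaseP n) = hadamardH n := by
  apply (reindexAlgEquiv ℤ ℤ (bitsEquiv n)).injective
  simp only [W_peaseP_eq_pow, map_mul, map_pow, coe_reindexAlgEquiv, reindex_permMat,
    reindex_hadamardH, one_mulVec]
  rw [show (fun v : Fin n → ZMod 2 => v) = id from rfl, funMatrix_id, one_mul]
  cases n with
  | zero => rw [pow_zero, Finset.univ_eq_empty, partialHadamard_empty]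
  | succ m =>
    have hC : (Cmat (m + 1) *ᵥ ·) = (· ∘ finRotate (m + 1)) := by
      ext v : 1
      rw [Cmat_eq_permMatrix, permMatrix_mulVec]
    rw [reindex_butterflies, hC, partialHadamard_last_mul_funMatrix_pow m (m + 1) le_rfl,
      Finset.filter_true_of_mem fun l _ => by omega, finRotate_pow_self, Equiv.Perm.coe_one]
    exact (congrArg _ funMatrix_id).trans (mul_one _)

/-- For the Pease sequence, the spreading matrix equals `I_n`, both conditions of the
characterization theorem hold, and hence `W(P) = H_n`. -/
theorem pease_in_P (n : ℕ) :
    spread n (peaseP n) = 1 ∧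
    Pseg (peaseP n) 0 n = spread n (peaseP n) * (spread n (peaseP n))ᵀ ∧
    IsUnit (spread n (peaseP n)) ∧
    (spread n (peaseP n))⁻¹ = spreadInvRows n (peaseP n) ∧
    W n (peaseP n) = hadamardH n := by
  have hX := spread_peaseP n
  refine ⟨hX, ?_, ?_, ?_, W_peaseP n⟩
  · rw [hX, Pseg_peaseP, Cmat_pow_self, transpose_one, mul_one]
  · rw [hX]
    exact isUnit_one
  · rw [hX, spreadInvRows_peaseP, inv_one]
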